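/- Let p be an odd prime and suppose d and c are integers with 1 ≤ c ≤ d, where d = k·p^e + r with 1 ≤ k ≤ (p-1)/2, e ≥ 0, and r ∈ {(p^e-1)/2, (p^e+1)/2}. Then the integer det M_{d,c,c,c} is not divisible by p; equivalently, the p-adic valuation of the numerator ∏_{j=0}^{c-1} C(d+j, c) equals the p-adic valuation of the denominator ∏_{j=0}^{c-1} C(c+j, c). -/

import Mathlib

/-!
Scaling column `j` of `M = toeplitzBinom d c` by `(2c-1-j)! (d+j-c)!` turns its `(i, j)` entry into
`d! P_i(c - j)` for polynomials `P_i` of degree `< c`. The determinant of `(P_i(x_j))` is the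
determinant of the coefficient matrix times the Vandermonde determinant of `x`, so it does not
change when all `x_j` are shifted by `d - c`; at the points `x_j = d - j` the matrix is triangular.
This yields `det M * ∏ C(c+j, c) = ∏ C(d+j, c)`.

By Kummer's theorem the `p`-adic valuations of both products are sums over `q = p^i` of the number
of `j < c` for which adding `c` and `d - c + j` (resp. `j`) carries at `q`. These two counts
agree: for `i ≤ e` the residue `d % q` is `(q ± 1)/2`, and for `i > e` we have `2d ≤ q + 1`.
Hence `p` does not divide `det M`.
-/

open Finset

/-- The Toeplitz matrix `M_{d,c,c,c}` of binomial coefficients, with `(i,j)` entry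
`C(d, c+i-j)` (interpreted as `0` when `c+i-j < 0`). -/
noncomputable def toeplitzBinom (d c : ℕ) : Matrix (Fin c) (Fin c) ℤ :=
  Matrix.of fun i j : Fin c =>
    if (j : ℕ) ≤ c + (i : ℕ) then (d.choose (c + (i : ℕ) - (j : ℕ)) : ℤ) else 0

open Polynomial Nat Matrix

lemma Nat.choose_mul_factorials_eq_ascFactorial_mul_descFactorial {n k a m b : ℕ}
    (h : m + k = n + b) :
    n.choose k * ((k + a)! * m !) = n ! * ((k + 1).ascFactorial a * m.descFactorial b) := by
  rcases le_or_gt k n with hk | hk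
  · rw [← factorial_mul_ascFactorial k a, ← factorial_mul_descFactorial (show b ≤ m by omega),
      show m - b = n - k by omega, ← choose_mul_factorial_mul_factorial hk]
    ring
  · rw [choose_eq_zero_of_lt hk, descFactorial_eq_zero_iff_lt.2 (by omega)]
    simp

lemma prod_choose_mul_prod_factorial_mul_prod_factorial {ι : Type*} (s : Finset ι) (f : ι → ℕ)
    (c : ℕ) (h : ∀ j ∈ s, c ≤ f j) :
    (∏ j ∈ s, ((f j).choose c : ℤ)) * ((∏ _j ∈ s, (c ! : ℤ)) * ∏ j ∈ s, ((f j - c)! : ℤ)) =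
      ∏ j ∈ s, ((f j)! : ℤ) := by
  rw [← prod_mul_distrib, ← prod_mul_distrib]
  refine prod_congr rfl fun j hj => ?_
  rw [← mul_assoc]
  exact_mod_cast choose_mul_factorial_mul_factorial (h j hj)

section EvalDet

variable {R : Type*} [CommRing R] {n : ℕ}

lemma Matrix.of_eval_eq_mul_vandermonde_transpose (P : Fin n → R[X])
    (hP : ∀ i, (P i).natDegree < n) (v : Fin n → R) :
    of (fun i j => (P i).eval (v j)) =
      of (fun i k : Fin n => (P i).coeff k) * (vandermonde v)ᵀ := by
  ext i j
  simp only [of_apply, mul_apply, transpose_apply, vandermonde_apply, eval_eq_sum_range' (hP i),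
    Fin.sum_univ_eq_sum_range (fun k => (P i).coeff k * v j ^ k)]

lemma Matrix.det_of_eval_add (P : Fin n → R[X]) (hP : ∀ i, (P i).natDegree < n)
    (v : Fin n → R) (a : R) :
    (of fun i j => (P i).eval (v j + a)).det = (of fun i j => (P i).eval (v j)).det := by
  rw [of_eval_eq_mul_vandermonde_transpose P hP, of_eval_eq_mul_vandermonde_transpose P hP,
    det_mul, det_mul, det_transpose, det_transpose, det_vandermonde_add]

end EvalDet

noncomputable def toeplitzBinomPoly (d c i : ℕ) : ℤ[X] :=
  (ascPochhammer ℤ (c - 1 - i)).comp (X + C ((i + 1 : ℕ) : ℤ)) *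
    (descPochhammer ℤ i).comp (C (d : ℤ) - X)

section Determinant

variable {d c : ℕ}

lemma toeplitzBinomPoly_natDegree_lt {i : ℕ} (hi : i < c) :
    (toeplitzBinomPoly d c i).natDegree < c := by
  have hasc :
      ((ascPochhammer ℤ (c - 1 - i)).comp (X + C ((i + 1 : ℕ) : ℤ))).natDegree ≤ c - 1 - i := by
    refine natDegree_comp_le.trans ?_
    rw [ascPochhammer_natDegree, natDegree_X_add_C, mul_one]
  have hdesc : ((descPochhammer ℤ i).comp (C (d : ℤ) - X)).natDegree ≤ i := by
    refine natDegree_comp_le.trans ?_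
    rw [descPochhammer_natDegree, show (C (d : ℤ) - X : ℤ[X]).natDegree = 1 by compute_degree!,
      mul_one]
  exact (natDegree_mul_le.trans (Nat.add_le_add hasc hdesc)).trans_lt (by omega)

lemma toeplitzBinomPoly_eval_natCast {i m : ℕ} (hm : m ≤ d) :
    (toeplitzBinomPoly d c i).eval (m : ℤ) =
      ((m + i + 1).ascFactorial (c - 1 - i) * (d - m).descFactorial i : ℕ) := by
  simp only [toeplitzBinomPoly, eval_mul, eval_comp, eval_add, eval_sub, eval_X, eval_C]
  rw [show (m : ℤ) + ((i + 1 : ℕ) : ℤ) = ((m + i + 1 : ℕ) : ℤ) by push_cast; ring,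
    ← Nat.cast_sub hm, ascPochhammer_nat_eq_natCast_ascFactorial,
    descPochhammer_eval_eq_descFactorial]
  push_cast
  rfl

lemma toeplitzBinom_mul_diagonal (hcd : c ≤ d) :
    toeplitzBinom d c * diagonal (fun j : Fin c => (((2 * c - 1 - j)! * (d + j - c)! : ℕ) : ℤ)) =
      (d ! : ℤ) • of fun i j : Fin c => (toeplitzBinomPoly d c i).eval ((c - j : ℕ) : ℤ) := by
  ext i j
  have hi := i.isLt
  have hj := j.isLt
  rw [mul_diagonal, Matrix.smul_apply, of_apply, toeplitzBinom, of_apply, if_pos (by omega),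
    toeplitzBinomPoly_eval_natCast (by omega), smul_eq_mul,
    show 2 * c - 1 - j = (c + i - j) + (c - 1 - i) by omega,
    show c - j + i + 1 = c + i - j + 1 by omega, show d - (c - j) = d + j - c by omega]
  exact_mod_cast choose_mul_factorials_eq_ascFactorial_mul_descFactorial (by omega)

lemma det_of_toeplitzBinomPoly_eval (hcd : c ≤ d) :
    (of fun i j : Fin c => (toeplitzBinomPoly d c i).eval ((d - j : ℕ) : ℤ)).det =
      ∏ i : Fin c, (((d + 1).ascFactorial (c - 1 - i) * i ! : ℕ) : ℤ) := by
  rw [det_of_isUpperTriangular]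
  · refine prod_congr rfl fun i _ => ?_
    rw [of_apply, toeplitzBinomPoly_eval_natCast (by omega), show d - i + i + 1 = d + 1 by omega,
      show d - (d - i) = i by omega, descFactorial_self]
  · intro i j hji
    rw [of_apply, toeplitzBinomPoly_eval_natCast (by omega), show d - (d - j) = j by omega,
      descFactorial_eq_zero_iff_lt.2 (show (j : ℕ) < i from hji), mul_zero, Nat.cast_zero]

lemma det_toeplitzBinom_mul_prod (hcd : c ≤ d) :
    (toeplitzBinom d c).det * ∏ j : Fin c, (((2 * c - 1 - j)! * (d + j - c)! : ℕ) : ℤ) =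
      ∏ i : Fin c, (((d + (c - 1 - i))! * i ! : ℕ) : ℤ) := by
  have hshift (j : Fin c) : ((c - j : ℕ) : ℤ) + ((d - c : ℕ) : ℤ) = ((d - j : ℕ) : ℤ) := by
    have hj := j.isLt
    push_cast [Nat.cast_sub hcd, Nat.cast_sub hj.le, Nat.cast_sub (hj.le.trans hcd)]
    ring
  calc (toeplitzBinom d c).det * ∏ j : Fin c, (((2 * c - 1 - j)! * (d + j - c)! : ℕ) : ℤ)
      = (d ! : ℤ) ^ c *
          (of fun i j : Fin c => (toeplitzBinomPoly d c i).eval ((c - j : ℕ) : ℤ)).det := by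
        rw [← det_diagonal, ← det_mul, toeplitzBinom_mul_diagonal hcd, det_smul, Fintype.card_fin]
    _ = (d ! : ℤ) ^ c *
          (of fun i j : Fin c => (toeplitzBinomPoly d c i).eval ((d - j : ℕ) : ℤ)).det := by
        rw [← det_of_eval_add _ (fun i => toeplitzBinomPoly_natDegree_lt i.isLt) _
          ((d - c : ℕ) : ℤ)]
        simp only [hshift]
    _ = ∏ i : Fin c, (((d + (c - 1 - i))! * i ! : ℕ) : ℤ) := by
        rw [det_of_toeplitzBinomPoly_eval hcd, ← Fin.prod_const c (d ! : ℤ), ← prod_mul_distrib]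
        refine prod_congr rfl fun i _ => ?_
        rw [← factorial_mul_ascFactorial]
        push_cast
        ring

lemma det_toeplitzBinom_mul_prod_choose (hcd : c ≤ d) :
    (toeplitzBinom d c).det * ∏ j ∈ range c, ((c + j).choose c : ℤ) =
      ∏ j ∈ range c, ((d + j).choose c : ℤ) := by
  have hdet := det_toeplitzBinom_mul_prod hcd
  rw [Fin.prod_univ_eq_prod_range (fun j => (((2 * c - 1 - j)! * (d + j - c)! : ℕ) : ℤ)),
    Fin.prod_univ_eq_prod_range (fun i => (((d + (c - 1 - i))! * i ! : ℕ) : ℤ))] at hdet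
  push_cast at hdet
  have hA : ∏ j ∈ range c, ((2 * c - 1 - j)! : ℤ) = ∏ j ∈ range c, ((c + j)! : ℤ) := by
    rw [← prod_range_reflect]
    exact prod_congr rfl fun j hj => by rw [mem_range] at hj; congr 2; omega
  have hF : ∏ j ∈ range c, ((d + (c - 1 - j))! : ℤ) = ∏ j ∈ range c, ((d + j)! : ℤ) :=
    prod_range_reflect (fun j => ((d + j)! : ℤ)) c
  rw [prod_mul_distrib, prod_mul_distrib, hA, hF] at hdet
  have hD := prod_choose_mul_prod_factorial_mul_prod_factorial (range c) (c + ·) c (by simp)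
  have hN := prod_choose_mul_prod_factorial_mul_prod_factorial (range c) (d + ·) c
    (fun _ _ => by omega)
  simp only [Nat.add_sub_cancel_left] at hD
  have hne : (∏ _j ∈ range c, (c ! : ℤ)) * (∏ j ∈ range c, (j ! : ℤ)) *
      ∏ j ∈ range c, ((d + j - c)! : ℤ) ≠ 0 := by
    positivity
  refine mul_right_cancel₀ hne ?_
  linear_combination hdet + (toeplitzBinom d c).det * (∏ j ∈ range c, ((d + j - c)! : ℤ)) * hD -
    (∏ j ∈ range c, (j ! : ℤ)) * hN

end Determinant

/-- The closed form of `#{j ∈ range N | q ≤ s + j % q}` when `s < q`. -/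
def residueCount (q s N : ℕ) : ℕ := s * (N / q) + (N % q - (q - s))

section ResidueCount

variable {q s : ℕ}

lemma residueCount_succ (hq : 0 < q) (hs : s < q) (N : ℕ) :
    residueCount q s (N + 1) = residueCount q s N + if q ≤ s + N % q then 1 else 0 := by
  unfold residueCount
  have hN := Nat.div_add_mod N q
  have hmod := Nat.mod_lt N hq
  rcases Nat.lt_or_ge (N % q + 1) q with hlt | hge
  · obtain ⟨hdiv, hmod'⟩ := (Nat.div_mod_unique hq).2
      ⟨(by omega : N % q + 1 + q * (N / q) = N + 1), hlt⟩
    rw [hdiv, hmod']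
    split_ifs <;> omega
  · obtain ⟨hdiv, hmod'⟩ := (Nat.div_mod_unique hq).2
      ⟨(by rw [Nat.mul_succ]; omega : 0 + q * (N / q + 1) = N + 1), hq⟩
    rw [hdiv, hmod', Nat.mul_succ]
    split_ifs <;> omega

lemma card_filter_add_mod_add_residueCount (hq : 0 < q) (hs : s < q) (x n : ℕ) :
    #{j ∈ range n | q ≤ s + (x + j) % q} + residueCount q s x = residueCount q s (x + n) := by
  induction n with
  | zero => simp
  | succ n ih =>
    rw [range_add_one, filter_insert, ← add_assoc x, residueCount_succ hq hs, ← ih]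
    split_ifs
    · rw [card_insert_of_notMem (by simp)]
      ring
    · rfl

lemma residueCount_add_of_two_mul_mod (hq : 0 < q) (c x : ℕ)
    (h : 2 * ((c + x) % q) + 1 = q ∨ 2 * ((c + x) % q) = q + 1) :
    residueCount q (c % q) (c + x) = residueCount q (c % q) c + residueCount q (c % q) x := by
  unfold residueCount
  have hc := Nat.mod_lt c hq
  have hx := Nat.mod_lt x hq
  have hdiv := Nat.add_div (a := c) (b := x) hq
  have hmod := Nat.add_mod c x q
  split_ifs at hdiv with hcarry
  · rw [Nat.mod_eq_sub_mod hcarry, Nat.mod_eq_of_lt (show c % q + x % q - q < q by omega)] at hmod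
    rw [hmod] at h
    rw [hdiv, hmod, mul_add, mul_add]
    omega
  · rw [Nat.mod_eq_of_lt (show c % q + x % q < q by omega)] at hmod
    rw [hmod] at h
    rw [hdiv, hmod, add_zero, mul_add]
    omega

lemma residueCount_add_of_two_mul_le (hq : 2 ≤ q) (c x : ℕ) (h : 2 * (c + x) ≤ q + 1) :
    residueCount q (c % q) (c + x) = residueCount q (c % q) c + residueCount q (c % q) x := by
  unfold residueCount
  rw [Nat.div_eq_of_lt (by omega), Nat.div_eq_of_lt (by omega), Nat.div_eq_of_lt (by omega),
    Nat.mod_eq_of_lt (by omega), Nat.mod_eq_of_lt (by omega), Nat.mod_eq_of_lt (by omega)]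
  omega

lemma card_carries_eq_of_residueCount_add (hq : 0 < q) (c x : ℕ)
    (h : residueCount q (c % q) (c + x) = residueCount q (c % q) c + residueCount q (c % q) x) :
    #{j ∈ range c | q ≤ c % q + (x + j) % q} = #{j ∈ range c | q ≤ c % q + j % q} := by
  have hx := card_filter_add_mod_add_residueCount hq (Nat.mod_lt c hq) x c
  have h0 := card_filter_add_mod_add_residueCount hq (Nat.mod_lt c hq) 0 c
  simp only [zero_add, residueCount, Nat.zero_div, Nat.zero_mod, mul_zero, Nat.zero_sub] at h0
  unfold residueCount at h hx
  rw [add_comm x c] at hx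
  omega

end ResidueCount

lemma factorization_prod_choose_eq_of_card_carries_eq {p c d : ℕ} (hp : p.Prime) (hcd : c ≤ d)
    (h : ∀ i, 1 ≤ i → #{j ∈ range c | p ^ i ≤ c % p ^ i + (d - c + j) % p ^ i} =
      #{j ∈ range c | p ^ i ≤ c % p ^ i + j % p ^ i}) :
    (∏ j ∈ range c, (d + j).choose c).factorization p =
      (∏ j ∈ range c, (c + j).choose c).factorization p := by
  have := Fact.mk hp
  have hlog {m : ℕ} (hm : m ≤ d + c) : Nat.log p m < Nat.log p (d + c) + 1 :=
    Nat.lt_succ_of_le (Nat.log_mono_right hm)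
  have hd (j : ℕ) (hj : j ∈ range c) : ((d + j).choose c).factorization p =
      #{i ∈ Ico 1 (Nat.log p (d + c) + 1) | p ^ i ≤ c % p ^ i + (d - c + j) % p ^ i} := by
    rw [mem_range] at hj
    rw [Nat.factorization_def _ hp, padicValNat_choose (by omega) (hlog (by omega)),
      Nat.sub_add_comm hcd]
  have hc (j : ℕ) (hj : j ∈ range c) : ((c + j).choose c).factorization p =
      #{i ∈ Ico 1 (Nat.log p (d + c) + 1) | p ^ i ≤ c % p ^ i + j % p ^ i} := by
    rw [mem_range] at hj
    rw [Nat.factorization_def _ hp, padicValNat_choose (by omega) (hlog (by omega)),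
      Nat.add_sub_cancel_left]
  rw [Nat.factorization_prod fun j _ => (Nat.choose_pos (by omega)).ne',
    Nat.factorization_prod fun j _ => (Nat.choose_pos (by omega)).ne', sum_apply', sum_apply',
    sum_congr rfl hd, sum_congr rfl hc]
  simp only [card_filter]
  rw [sum_comm, sum_comm (s := range c)]
  refine sum_congr rfl fun i hi => ?_
  simpa only [card_filter] using h i (mem_Ico.1 hi).1

lemma two_mul_mod_of_dvd {q N r : ℕ} (hq : 1 < q) (hqN : q ∣ N)
    (hr : 2 * r + 1 = N ∨ 2 * r = N + 1) :
    2 * (r % q) + 1 = q ∨ 2 * (r % q) = q + 1 := by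
  obtain ⟨m, rfl⟩ := hqN
  have hodd : Odd (q * m) := by
    rcases hr with hr | hr
    · exact ⟨r, hr.symm⟩
    · exact ⟨r - 1, by omega⟩
  obtain ⟨⟨u, rfl⟩, ⟨t, rfl⟩⟩ := Nat.odd_mul.1 hodd
  have : (2 * u + 1) * (2 * t + 1) = 2 * ((2 * u + 1) * t) + (2 * u + 1) := by ring
  rcases hr with hr | hr
  · left
    rw [show r = (2 * u + 1) * t + u by omega, Nat.mul_add_mod, Nat.mod_eq_of_lt (by omega)]
  · right
    rw [show r = (2 * u + 1) * t + (u + 1) by omega, Nat.mul_add_mod,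
      Nat.mod_eq_of_lt (by omega)]
    omega

lemma two_mul_mod_pow_of_le {p k e r i : ℕ} (hp : 1 < p)
    (hr : 2 * r + 1 = p ^ e ∨ 2 * r = p ^ e + 1) (hi : 1 ≤ i) (hie : i ≤ e) :
    2 * ((k * p ^ e + r) % p ^ i) + 1 = p ^ i ∨ 2 * ((k * p ^ e + r) % p ^ i) = p ^ i + 1 := by
  obtain ⟨t, ht⟩ := pow_dvd_pow p hie
  rw [ht, show k * (p ^ i * t) + r = r + p ^ i * (k * t) by ring, Nat.add_mul_mod_self_left]
  exact two_mul_mod_of_dvd (Nat.one_lt_pow (by omega) hp) (Dvd.intro t ht.symm) (ht ▸ hr)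

lemma two_mul_le_pow_of_lt {p k e r i : ℕ} (hp : 1 ≤ p) (hkp : k ≤ (p - 1) / 2)
    (hr : 2 * r ≤ p ^ e + 1) (hei : e < i) :
    2 * (k * p ^ e + r) ≤ p ^ i + 1 := by
  have hk : (2 * k + 1) * p ^ e ≤ p * p ^ e := Nat.mul_le_mul_right _ (by omega)
  have hpow : p * p ^ e ≤ p ^ i := by
    rw [← pow_succ']
    exact Nat.pow_le_pow_right hp hei
  linarith

lemma Int.not_dvd_of_mul_eq_of_factorization_eq {p : ℕ} (hp : p.Prime) {a : ℤ} {D N : ℕ}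
    (hN : N ≠ 0) (h : a * D = N) (hv : N.factorization p = D.factorization p) :
    ¬ (p : ℤ) ∣ a := by
  have hmul : a.natAbs * D = N := by
    simpa only [Int.natAbs_mul, Int.natAbs_natCast] using congrArg Int.natAbs h
  have ha : a.natAbs ≠ 0 := left_ne_zero_of_mul (hmul ▸ hN)
  have hD : D ≠ 0 := right_ne_zero_of_mul (hmul ▸ hN)
  have hzero : a.natAbs.factorization p = 0 := by
    rw [← hmul, Nat.factorization_mul ha hD, Finsupp.add_apply] at hv
    omega
  intro hdvd
  exact (hp.factorization_pos_of_dvd ha (Int.natCast_dvd.1 hdvd)).ne' hzero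

theorem stmt4_general (p : ℕ) (hp : p.Prime)
    (d c k e r : ℕ) (hkp : k ≤ (p - 1) / 2)
    (hr : 2 * r = p ^ e - 1 ∨ 2 * r = p ^ e + 1)
    (hd : d = k * p ^ e + r) (hcd : c ≤ d) :
    ¬ ((p : ℤ) ∣ (toeplitzBinom d c).det) ∧
      (∏ j ∈ Finset.range c, (d + j).choose c).factorization p =
        (∏ j ∈ Finset.range c, (c + j).choose c).factorization p := by
  have hr' : 2 * r + 1 = p ^ e ∨ 2 * r = p ^ e + 1 := by
    have := pow_pos hp.pos e
    omega
  have hcarries (i : ℕ) (hi : 1 ≤ i) : #{j ∈ range c | p ^ i ≤ c % p ^ i + (d - c + j) % p ^ i} =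
      #{j ∈ range c | p ^ i ≤ c % p ^ i + j % p ^ i} := by
    have hq : 1 < p ^ i := Nat.one_lt_pow (by omega) hp.one_lt
    refine card_carries_eq_of_residueCount_add (by omega) c (d - c) ?_
    rcases le_or_gt i e with hie | hei
    · exact residueCount_add_of_two_mul_mod (by omega) c (d - c) (by
        rw [Nat.add_sub_cancel' hcd, hd]
        exact two_mul_mod_pow_of_le hp.one_lt hr' hi hie)
    · exact residueCount_add_of_two_mul_le hq c (d - c) (by
        rw [Nat.add_sub_cancel' hcd, hd]
        exact two_mul_le_pow_of_lt hp.one_lt.le hkp (by omega) hei)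
  have hv := factorization_prod_choose_eq_of_card_carries_eq hp hcd hcarries
  refine ⟨Int.not_dvd_of_mul_eq_of_factorization_eq hp ?_ ?_ hv, hv⟩
  · exact prod_ne_zero_iff.2 fun j _ => (Nat.choose_pos (by omega)).ne'
  · push_cast
    exact det_toeplitzBinom_mul_prod_choose hcd

theorem stmt4 (p : ℕ) (hp : p.Prime) (hodd : Odd p)
    (d c k e r : ℕ) (hk : 1 ≤ k) (hkp : k ≤ (p - 1) / 2)
    (hr : 2 * r = p ^ e - 1 ∨ 2 * r = p ^ e + 1)
    (hd : d = k * p ^ e + r) (hc : 1 ≤ c) (hcd : c ≤ d) :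
    ¬ ((p : ℤ) ∣ (toeplitzBinom d c).det) ∧
      (∏ j ∈ Finset.range c, (d + j).choose c).factorization p =
        (∏ j ∈ Finset.range c, (c + j).choose c).factorization p :=
  stmt4_general p hp d c k e r hkp hr hd hcd
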